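/- Let A be a self-adjoint operator on a Hilbert space H with A ≥ 1 and let H^γ carry the norm ‖x‖_γ = ‖A^γ x‖. For f ∈ C([0,T], H) define (Nf)(t) = ∫₀^t e^{−A(t−s)} f(s) ds. Then for every ε ∈ [0,1) and γ > ε there is a constant C such that for all f with sup_{t∈(0,T]} t^{γ−ε}‖f(t)‖_{γ−ε} + sup_{t∈[0,T]} ‖f(t)‖ < ∞, one has sup_{t∈(0,T]} t^{γ}‖(Nf)(t)‖_{γ} + sup_{t∈[0,T]} ‖(Nf)(t)‖ ≤ C·T·( sup_{t∈(0,T]} t^{γ−ε}‖f(t)‖_{γ−ε} + sup_{t∈[0,T]} ‖f(t)‖ ). -/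

import Mathlib

/-!
Split `∫₀ᵗ = ∫₀^{t/2} + ∫_{t/2}^t`. On the first piece `t - s ≥ t/2`, so the smoothing estimate
`a^γ e^{-a(t-s)} ≤ C (t-s)^{-γ} ≤ C (t/2)^{-γ}` lets `f(s)` be measured in `H` itself. On the
second piece the kernel only absorbs `a^ε`: the bound `C (t-s)^{-ε}` is integrable because
`ε < 1`, and the rest `a^{γ-ε} f(s)` has norm at most `M s^{ε-γ} ≤ M (t/2)^{ε-γ}`. Each piece is
estimated coordinatewise by a weighted Cauchy–Schwarz inequality and then summed over the
eigenvalues; the powers of `t/2` combine to `t^{-γ} · t`. The bound on `‖(Nf)(t)‖` only needs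
`e^{-a(t-s)} ≤ 1`.
-/

open intervalIntegral Set

theorem sq_integral_mul_le_integral_mul_integral_mul_sq {α β : ℝ} (hαβ : α ≤ β) {φ g : ℝ → ℝ}
    (hφ : Continuous φ) (hφ0 : ∀ x, 0 ≤ φ x) (hg : Continuous g) :
    (∫ x in α..β, φ x * g x) ^ 2 ≤ (∫ x in α..β, φ x) * ∫ x in α..β, φ x * g x ^ 2 := by
  have hquad : ∀ c : ℝ, 0 ≤ (∫ x in α..β, φ x * g x ^ 2) * (c * c)
      + 2 * (∫ x in α..β, φ x * g x) * c + ∫ x in α..β, φ x := by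
    intro c
    have hexp : (fun x => φ x * (c * g x + 1) ^ 2)
        = fun x => c ^ 2 * (φ x * g x ^ 2) + 2 * c * (φ x * g x) + φ x := by
      ext x; ring
    have h0 : 0 ≤ ∫ x in α..β, φ x * (c * g x + 1) ^ 2 :=
      integral_nonneg hαβ fun x _ => mul_nonneg (hφ0 x) (sq_nonneg _)
    rw [hexp, integral_add, integral_add, integral_const_mul, integral_const_mul] at h0
    · linarith
    all_goals exact Continuous.intervalIntegrable (by fun_prop) _ _
  have := discrim_le_zero hquad
  rw [discrim] at this
  linarith

theorem rpow_mul_exp_neg_le_factorial_ceil {r x : ℝ} (hr : 0 ≤ r) (hx : 0 ≤ x) :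
    x ^ r * Real.exp (-x) ≤ (Nat.ceil r).factorial := by
  have hexp : 0 < Real.exp x := Real.exp_pos x
  rw [Real.exp_neg, ← div_eq_mul_inv, div_le_iff₀ hexp]
  rcases le_or_gt x 1 with hx1 | hx1
  · calc x ^ r ≤ 1 := Real.rpow_le_one hx hx1 hr
      _ ≤ 1 * Real.exp x := by rw [one_mul]; exact Real.one_le_exp hx
      _ ≤ _ := by gcongr; exact_mod_cast Nat.one_le_iff_ne_zero.2 (Nat.factorial_ne_zero _)
  · calc x ^ r ≤ x ^ (Nat.ceil r : ℝ) := Real.rpow_le_rpow_of_exponent_le hx1.le (Nat.le_ceil r)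
      _ = x ^ Nat.ceil r := Real.rpow_natCast x _
      _ ≤ _ := by
        have := Real.pow_div_factorial_le_exp x hx (Nat.ceil r)
        rwa [div_le_iff₀ (by positivity), mul_comm] at this

theorem rpow_mul_exp_neg_mul_le {r a u : ℝ} (hr : 0 ≤ r) (ha : 0 ≤ a) (hu : 0 < u) :
    a ^ r * Real.exp (-a * u) ≤ (Nat.ceil r).factorial * u ^ (-r) := by
  have hsplit : a ^ r = (a * u) ^ r * u ^ (-r) := by
    rw [Real.mul_rpow ha hu.le, mul_assoc, ← Real.rpow_add hu, add_neg_cancel, Real.rpow_zero,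
      mul_one]
  rw [hsplit, mul_right_comm, neg_mul]
  gcongr
  exact rpow_mul_exp_neg_le_factorial_ceil hr (mul_nonneg ha hu.le)

section SquareSums

variable {ι : Type*}

theorem sum_sq_le_of_sqrt_tsum_sq_le {x : ι → ℝ} {N : ℝ} (hx : Summable fun i => x i ^ 2)
    (h : √(∑' i, x i ^ 2) ≤ N) (u : Finset ι) : ∑ i ∈ u, x i ^ 2 ≤ N ^ 2 :=
  (hx.sum_le_tsum u fun _ _ => sq_nonneg _).trans (Real.sqrt_le_iff.mp h).2

theorem sqrt_tsum_sq_le_of_sum_sq_le {x : ι → ℝ} {N : ℝ} (hN : 0 ≤ N)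
    (h : ∀ u : Finset ι, ∑ i ∈ u, x i ^ 2 ≤ N ^ 2) : √(∑' i, x i ^ 2) ≤ N :=
  Real.sqrt_le_left hN |>.mpr (tsum_le_of_sum_le' (sq_nonneg N) h)

theorem sum_sq_add_le {x y : ι → ℝ} {X Y : ℝ} (u : Finset ι) (hX : 0 ≤ X) (hY : 0 ≤ Y)
    (hx : ∑ i ∈ u, x i ^ 2 ≤ X ^ 2) (hy : ∑ i ∈ u, y i ^ 2 ≤ Y ^ 2) :
    ∑ i ∈ u, (x i + y i) ^ 2 ≤ (X + Y) ^ 2 := by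
  have hxy : (∑ i ∈ u, x i * y i) ^ 2 ≤ (X * Y) ^ 2 :=
    (u.sum_mul_sq_le_sq_mul_sq x y).trans <| by
      rw [mul_pow]; exact mul_le_mul hx hy (u.sum_nonneg fun i _ => sq_nonneg _) (sq_nonneg X)
  have := (abs_le_of_sq_le_sq hxy (mul_nonneg hX hY)).trans' (le_abs_self _)
  calc ∑ i ∈ u, (x i + y i) ^ 2
      = ∑ i ∈ u, x i ^ 2 + 2 * ∑ i ∈ u, x i * y i + ∑ i ∈ u, y i ^ 2 := by
        simp only [add_sq, Finset.sum_add_distrib, Finset.mul_sum, mul_assoc]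
    _ ≤ (X + Y) ^ 2 := by nlinarith

theorem sum_sq_integral_mul_le {α β N : ℝ} (hαβ : α ≤ β) {φ g : ι → ℝ → ℝ} {ρ : ℝ → ℝ}
    (u : Finset ι) (hφ : ∀ i, Continuous (φ i)) (hφ0 : ∀ i s, 0 ≤ φ i s)
    (hg : ∀ i, Continuous (g i)) (hρ : IntervalIntegrable ρ MeasureTheory.volume α β)
    (hφρ : ∀ i, ∀ s ∈ Ioo α β, φ i s ≤ ρ s)
    (hgN : ∀ s ∈ Ioo α β, ∑ i ∈ u, g i s ^ 2 ≤ N ^ 2) :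
    ∑ i ∈ u, (∫ s in α..β, φ i s * g i s) ^ 2 ≤ ((∫ s in α..β, ρ s) * N) ^ 2 := by
  rcases u.eq_empty_or_nonempty with rfl | ⟨i₀, -⟩
  · simpa using sq_nonneg _
  have hρ0 : ∀ s ∈ Ioo α β, 0 ≤ ρ s := fun s hs => (hφ0 i₀ s).trans (hφρ i₀ s hs)
  have hR : 0 ≤ ∫ s in α..β, ρ s := by
    simpa using integral_mono_on_of_le_Ioo hαβ intervalIntegrable_const hρ hρ0
  have hφR : ∀ i, ∫ s in α..β, φ i s ≤ ∫ s in α..β, ρ s := fun i =>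
    integral_mono_on_of_le_Ioo hαβ ((hφ i).intervalIntegrable _ _) hρ (hφρ i)
  have hcont : ∀ i, Continuous fun s => φ i s * g i s ^ 2 := fun i => (hφ i).mul ((hg i).pow 2)
  have hpoint : ∀ s ∈ Ioo α β, ∑ i ∈ u, φ i s * g i s ^ 2 ≤ ρ s * N ^ 2 := fun s hs =>
    calc ∑ i ∈ u, φ i s * g i s ^ 2 ≤ ∑ i ∈ u, ρ s * g i s ^ 2 :=
          Finset.sum_le_sum fun i _ => mul_le_mul_of_nonneg_right (hφρ i s hs) (sq_nonneg _)
      _ = ρ s * ∑ i ∈ u, g i s ^ 2 := (Finset.mul_sum ..).symm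
      _ ≤ ρ s * N ^ 2 := mul_le_mul_of_nonneg_left (hgN s hs) (hρ0 s hs)
  calc ∑ i ∈ u, (∫ s in α..β, φ i s * g i s) ^ 2
      ≤ ∑ i ∈ u, (∫ s in α..β, ρ s) * ∫ s in α..β, φ i s * g i s ^ 2 :=
        Finset.sum_le_sum fun i _ =>
          (sq_integral_mul_le_integral_mul_integral_mul_sq hαβ (hφ i) (hφ0 i) (hg i)).trans <|
            mul_le_mul_of_nonneg_right (hφR i) <|
              integral_nonneg hαβ fun s _ => mul_nonneg (hφ0 i s) (sq_nonneg _)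
    _ = (∫ s in α..β, ρ s) * ∫ s in α..β, ∑ i ∈ u, φ i s * g i s ^ 2 := by
        rw [← Finset.mul_sum, integral_finsetSum fun i _ => (hcont i).intervalIntegrable _ _]
    _ ≤ (∫ s in α..β, ρ s) * ∫ s in α..β, ρ s * N ^ 2 := by
        refine mul_le_mul_of_nonneg_left ?_ hR
        refine integral_mono_on_of_le_Ioo hαβ ?_ (hρ.mul_const _) hpoint
        exact (continuous_finsetSum u fun i _ => hcont i).intervalIntegrable _ _
    _ = ((∫ s in α..β, ρ s) * N) ^ 2 := by rw [integral_mul_const]; ring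

end SquareSums

theorem intervalIntegrable_sub_rpow_neg {ε τ t : ℝ} (hε : ε < 1) :
    IntervalIntegrable (fun s => (t - s) ^ (-ε)) MeasureTheory.volume τ t := by
  simpa using (intervalIntegrable_rpow' (a := t - τ) (b := t - t) (by linarith)).comp_sub_left t

theorem integral_sub_rpow_neg {ε τ t : ℝ} (hε : ε < 1) :
    ∫ s in τ..t, (t - s) ^ (-ε) = (t - τ) ^ (1 - ε) / (1 - ε) := by
  rw [integral_comp_sub_left (fun x => x ^ (-ε)) t, sub_self, integral_rpow (Or.inl (by linarith)),
    Real.zero_rpow (by linarith), sub_zero, neg_add_eq_sub]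

theorem rpow_mul_integral_exp_mul_eq_add {a : ℝ} (ha : 0 < a) {h : ℝ → ℝ} (hh : Continuous h)
    (γ ε τ : ℝ) {t : ℝ} :
    a ^ γ * ∫ s in 0..t, Real.exp (-a * (t - s)) * h s
      = (∫ s in 0..τ, a ^ γ * Real.exp (-a * (t - s)) * h s)
        + ∫ s in τ..t, a ^ ε * Real.exp (-a * (t - s)) * (a ^ (γ - ε) * h s) := by
  have hpow : a ^ γ = a ^ ε * a ^ (γ - ε) := by rw [← Real.rpow_add ha, add_sub_cancel]
  have hint : ∀ α β, IntervalIntegrable (fun s => Real.exp (-a * (t - s)) * h s)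
      MeasureTheory.volume α β := fun α β => Continuous.intervalIntegrable (by fun_prop) α β
  rw [← integral_add_adjacent_intervals (hint 0 τ) (hint τ t), mul_add, ← integral_const_mul,
    ← integral_const_mul]
  congr 1 <;> refine integral_congr fun s _ => ?_ <;> simp only [hpow] <;> ring

section Convolution

variable {ι : Type*} {a : ι → ℝ} {g : ι → ℝ → ℝ}

theorem sum_sq_integral_rpow_mul_exp_mul_le_of_lt {r τ t N : ℝ} (hr : 0 ≤ r) (hτ : 0 ≤ τ)
    (hτt : τ < t) (ha : ∀ i, 0 ≤ a i) (hg : ∀ i, Continuous (g i)) (u : Finset ι)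
    (hgN : ∀ s ∈ Ioo 0 τ, ∑ i ∈ u, g i s ^ 2 ≤ N ^ 2) :
    ∑ i ∈ u, (∫ s in 0..τ, a i ^ r * Real.exp (-a i * (t - s)) * g i s) ^ 2
      ≤ ((Nat.ceil r).factorial * (t - τ) ^ (-r) * τ * N) ^ 2 := by
  have hbound : ∀ i, ∀ s ∈ Ioo 0 τ,
      a i ^ r * Real.exp (-a i * (t - s)) ≤ (Nat.ceil r).factorial * (t - τ) ^ (-r) := by
    intro i s hs
    refine (rpow_mul_exp_neg_mul_le hr (ha i) (sub_pos.2 (hs.2.trans hτt))).trans ?_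
    exact mul_le_mul_of_nonneg_left
      (Real.rpow_le_rpow_of_nonpos (sub_pos.2 hτt) (by linarith [hs.2]) (by linarith))
      (Nat.cast_nonneg _)
  convert sum_sq_integral_mul_le (φ := fun i s => a i ^ r * Real.exp (-a i * (t - s))) hτ u
    (fun i => continuous_const.mul (by fun_prop))
    (fun i s => mul_nonneg (Real.rpow_nonneg (ha i) _) (Real.exp_pos _).le) hg
    intervalIntegrable_const hbound hgN using 2
  simp only [integral_const, sub_zero, smul_eq_mul]
  ring

theorem sum_sq_integral_rpow_mul_exp_mul_le {ε τ t N : ℝ} (hε0 : 0 ≤ ε) (hε1 : ε < 1)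
    (hτt : τ ≤ t) (ha : ∀ i, 0 ≤ a i) (hg : ∀ i, Continuous (g i)) (u : Finset ι)
    (hgN : ∀ s ∈ Ioo τ t, ∑ i ∈ u, g i s ^ 2 ≤ N ^ 2) :
    ∑ i ∈ u, (∫ s in τ..t, a i ^ ε * Real.exp (-a i * (t - s)) * g i s) ^ 2
      ≤ ((Nat.ceil ε).factorial * ((t - τ) ^ (1 - ε) / (1 - ε)) * N) ^ 2 := by
  have hbound : ∀ i, ∀ s ∈ Ioo τ t,
      a i ^ ε * Real.exp (-a i * (t - s)) ≤ (Nat.ceil ε).factorial * (t - s) ^ (-ε) :=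
    fun i s hs => rpow_mul_exp_neg_mul_le hε0 (ha i) (by linarith [hs.2])
  convert sum_sq_integral_mul_le (φ := fun i s => a i ^ ε * Real.exp (-a i * (t - s))) hτt u
    (fun i => continuous_const.mul (by fun_prop))
    (fun i s => mul_nonneg (Real.rpow_nonneg (ha i) _) (Real.exp_pos _).le) hg
    ((intervalIntegrable_sub_rpow_neg hε1).const_mul _) hbound hgN using 2
  rw [integral_const_mul, integral_sub_rpow_neg hε1]

theorem sqrt_tsum_sq_integral_exp_mul_le {t M : ℝ} (ht : 0 ≤ t) (hM : 0 ≤ M)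
    (ha : ∀ i, 0 ≤ a i) {f : ℝ → ι → ℝ} (hf : ∀ i, Continuous fun s => f s i)
    (hfM : ∀ s ∈ Ioo 0 t, ∀ u : Finset ι, ∑ i ∈ u, f s i ^ 2 ≤ M ^ 2) :
    √(∑' i, (∫ s in 0..t, Real.exp (-a i * (t - s)) * f s i) ^ 2) ≤ t * M := by
  refine sqrt_tsum_sq_le_of_sum_sq_le (mul_nonneg ht hM) fun u => ?_
  have hexp_le_one : ∀ i, ∀ s ∈ Ioo 0 t, Real.exp (-a i * (t - s)) ≤ 1 := fun i s hs =>
    Real.exp_le_one_iff.2 <|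
      mul_nonpos_of_nonpos_of_nonneg (neg_nonpos.2 (ha i)) (sub_nonneg.2 hs.2.le)
  simpa using sum_sq_integral_mul_le (φ := fun i s => Real.exp (-a i * (t - s)))
    (g := fun i s => f s i) ht u (fun i => by fun_prop) (fun i s => (Real.exp_pos _).le) hf
    intervalIntegrable_const hexp_le_one (hfM · · u)

theorem rpow_mul_sqrt_tsum_sq_rpow_mul_integral_exp_mul_le {γ ε t M : ℝ} (hε0 : 0 ≤ ε)
    (hε1 : ε < 1) (hεγ : ε ≤ γ) (ht : 0 < t) (hM : 0 ≤ M) (ha : ∀ i, 0 < a i)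
    {f : ℝ → ι → ℝ} (hf : ∀ i, Continuous fun s => f s i)
    (hfM : ∀ s ∈ Ioo 0 t, ∀ u : Finset ι, ∑ i ∈ u, f s i ^ 2 ≤ M ^ 2)
    (hfγε : ∀ s ∈ Ioo 0 t, ∀ u : Finset ι,
      ∑ i ∈ u, (a i ^ (γ - ε) * f s i) ^ 2 ≤ (M / s ^ (γ - ε)) ^ 2) :
    t ^ γ * √(∑' i, (a i ^ γ * ∫ s in 0..t, Real.exp (-a i * (t - s)) * f s i) ^ 2)
      ≤ 2 ^ γ * ((Nat.ceil γ).factorial + (Nat.ceil ε).factorial / (1 - ε)) * t * M := by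
  set τ := t / 2 with hτ_def
  have hτ : 0 < τ := half_pos ht
  have hτt : τ < t := half_lt_self ht
  have hsub : t - τ = τ := sub_half t
  have hsplit := fun i => rpow_mul_integral_exp_mul_eq_add (t := t) (ha i) (hf i) γ ε τ
  have hnear : ∀ u : Finset ι,
      ∑ i ∈ u, (∫ s in 0..τ, a i ^ γ * Real.exp (-a i * (t - s)) * f s i) ^ 2
        ≤ ((Nat.ceil γ).factorial * τ ^ (-γ) * τ * M) ^ 2 := fun u => by
    simpa only [hsub] using sum_sq_integral_rpow_mul_exp_mul_le_of_lt (hε0.trans hεγ) hτ.le hτt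
      (fun i => (ha i).le) hf u fun s hs => hfM s ⟨hs.1, hs.2.trans hτt⟩ u
  have hfar : ∀ u : Finset ι,
      ∑ i ∈ u, (∫ s in τ..t, a i ^ ε * Real.exp (-a i * (t - s)) * (a i ^ (γ - ε) * f s i)) ^ 2
        ≤ ((Nat.ceil ε).factorial * (τ ^ (1 - ε) / (1 - ε)) * (M / τ ^ (γ - ε))) ^ 2 :=
      fun u => by
    have hgN : ∀ s ∈ Ioo τ t, ∑ i ∈ u, (a i ^ (γ - ε) * f s i) ^ 2 ≤ (M / τ ^ (γ - ε)) ^ 2 :=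
      fun s hs => (hfγε s ⟨hτ.trans hs.1, hs.2⟩ u).trans <| by
        have hs0 : 0 < s := hτ.trans hs.1
        gcongr
        exact hs.1.le
    simpa only [hsub] using sum_sq_integral_rpow_mul_exp_mul_le
      (g := fun i s => a i ^ (γ - ε) * f s i) hε0 hε1 hτt.le (fun i => (ha i).le)
      (fun i => continuous_const.mul (hf i)) u hgN
  have hnorm : √(∑' i, (a i ^ γ * ∫ s in 0..t, Real.exp (-a i * (t - s)) * f s i) ^ 2)
      ≤ (Nat.ceil γ).factorial * τ ^ (-γ) * τ * M
        + (Nat.ceil ε).factorial * (τ ^ (1 - ε) / (1 - ε)) * (M / τ ^ (γ - ε)) := by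
    have := sub_pos.2 hε1
    refine sqrt_tsum_sq_le_of_sum_sq_le (by positivity) fun u => ?_
    simpa only [hsplit] using sum_sq_add_le u (by positivity) (by positivity) (hnear u) (hfar u)
  have ht_pow : t ^ γ = 2 ^ γ * τ ^ γ := by
    rw [← Real.mul_rpow zero_le_two hτ.le, hτ_def, mul_div_cancel₀ t two_ne_zero]
  calc t ^ γ * √(∑' i, (a i ^ γ * ∫ s in 0..t, Real.exp (-a i * (t - s)) * f s i) ^ 2)
      ≤ t ^ γ * ((Nat.ceil γ).factorial * τ ^ (-γ) * τ * M
          + (Nat.ceil ε).factorial * (τ ^ (1 - ε) / (1 - ε)) * (M / τ ^ (γ - ε))) :=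
        mul_le_mul_of_nonneg_left hnorm (by positivity)
    _ = 2 ^ γ * ((Nat.ceil γ).factorial + (Nat.ceil ε).factorial / (1 - ε)) * τ * M := by
        rw [ht_pow, Real.rpow_neg hτ.le, Real.rpow_sub hτ, Real.rpow_sub hτ, Real.rpow_one]
        field_simp
    _ ≤ 2 ^ γ * ((Nat.ceil γ).factorial + (Nat.ceil ε).factorial / (1 - ε)) * t * M := by
        gcongr

end Convolution

/-- Regularization lemma for the semigroup convolution
`(Nf)(t) = ∫₀ᵗ e^{-A(t-s)} f(s) ds`, with `A` realized as a diagonal operator with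
eigenvalues `a i ≥ 1`: convolution gains `ε` powers of regularity, with
`‖Nf‖_{Y^γ_T} ≤ C T ‖f‖_{Y^{γ-ε}_T}` where
`‖y‖_{Y^γ_T} = sup_{t∈(0,T]} t^γ ‖y(t)‖_γ + sup_{t∈[0,T]} ‖y(t)‖`. -/
theorem stmt_9 (γ ε : ℝ) (hε0 : 0 ≤ ε) (hε1 : ε < 1) (hγ : ε < γ) :
    ∃ C : ℝ, 0 < C ∧ ∀ (T : ℝ), 0 < T → ∀ (a : ℕ → ℝ), (∀ i, 1 ≤ a i) →
      ∀ (f : ℝ → ℕ → ℝ), (∀ i, Continuous fun s => f s i) →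
      (∀ s ∈ Set.Icc (0 : ℝ) T, Summable fun i => (f s i) ^ 2) →
      (∀ s ∈ Set.Ioc (0 : ℝ) T, Summable fun i => ((a i) ^ (γ - ε) * f s i) ^ 2) →
      ∀ M : ℝ,
      (∀ s ∈ Set.Ioc (0 : ℝ) T,
        s ^ (γ - ε) * Real.sqrt (∑' i, ((a i) ^ (γ - ε) * f s i) ^ 2) ≤ M) →
      (∀ s ∈ Set.Icc (0 : ℝ) T, Real.sqrt (∑' i, (f s i) ^ 2) ≤ M) →
      (∀ t ∈ Set.Ioc (0 : ℝ) T,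
        t ^ γ * Real.sqrt (∑' i,
          ((a i) ^ γ * ∫ s in (0 : ℝ)..t, Real.exp (-(a i) * (t - s)) * f s i) ^ 2)
          ≤ C * T * M) ∧
      (∀ t ∈ Set.Icc (0 : ℝ) T,
        Real.sqrt (∑' i,
          (∫ s in (0 : ℝ)..t, Real.exp (-(a i) * (t - s)) * f s i) ^ 2)
          ≤ C * T * M) := by
  set K := 2 ^ γ * ((Nat.ceil γ).factorial + (Nat.ceil ε).factorial / (1 - ε))
  have hK : 0 ≤ K := by have := sub_pos.2 hε1; positivity
  refine ⟨1 + K, by positivity, fun T hT a ha f hf hsum hsumγε M hMγε hM0 => ?_⟩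
  have hM : 0 ≤ M := (Real.sqrt_nonneg _).trans (hM0 0 ⟨le_rfl, hT.le⟩)
  have hfM : ∀ s ∈ Icc 0 T, ∀ u : Finset ℕ, ∑ i ∈ u, f s i ^ 2 ≤ M ^ 2 := fun s hs =>
    sum_sq_le_of_sqrt_tsum_sq_le (hsum s hs) (hM0 s hs)
  have hfγε : ∀ s ∈ Ioc 0 T, ∀ u : Finset ℕ,
      ∑ i ∈ u, (a i ^ (γ - ε) * f s i) ^ 2 ≤ (M / s ^ (γ - ε)) ^ 2 := fun s hs =>
    sum_sq_le_of_sqrt_tsum_sq_le (hsumγε s hs) <|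
      (le_div_iff₀' (Real.rpow_pos_of_pos hs.1 _)).2 (hMγε s hs)
  have hTM : T * M ≤ (1 + K) * T * M := by nlinarith [mul_nonneg hT.le hM]
  constructor
  · intro t ⟨ht0, htT⟩
    calc _ ≤ K * t * M := rpow_mul_sqrt_tsum_sq_rpow_mul_integral_exp_mul_le hε0 hε1 hγ.le ht0
          hM (fun i => one_pos.trans_le (ha i)) hf
          (fun s hs => hfM s ⟨hs.1.le, hs.2.le.trans htT⟩)
          (fun s hs => hfγε s ⟨hs.1, hs.2.le.trans htT⟩)
      _ ≤ K * T * M := by gcongr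
      _ ≤ (1 + K) * T * M := by linarith [mul_nonneg hT.le hM]
  · intro t ⟨ht0, htT⟩
    calc _ ≤ t * M := sqrt_tsum_sq_integral_exp_mul_le ht0 hM
          (fun i => zero_le_one.trans (ha i)) hf (fun s hs => hfM s ⟨hs.1.le, hs.2.le.trans htT⟩)
      _ ≤ T * M := by gcongr
      _ ≤ (1 + K) * T * M := hTM
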